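/- Let m ≥ 3 and let A be an independent set of G_m. Then exactly one of the following holds: (1) A ∩ {a_m,b_m,c_m} = ∅ and A is an independent set of G_{m−1}; (2) A ∩ {a_m,b_m,c_m} = {b_m} and A∖{b_m} is an independent set of G_{m−1}; (3) A ∩ {a_m,b_m,c_m} = {a_m,c_m} and A∖{a_m,c_m} is an independent set of G_{m−2}; in particular A ∩ {a_{m−1},b_{m−1},c_{m−1}} = ∅; (4) A ∩ {a_m,b_m,c_m} = {a_m} and A∖{a_m} is an independent set of G_{m−1} disjoint from {a_{m−1},c_{m−1}}; (5) A ∩ {a_m,b_m,c_m} = {c_m} and A∖{c_m} is an independent set of G_{m−1} disjoint from {b_{m−1}}. Moreover, in cases (2), (4), (5) the set A is a maximal independent set of G_m whenever A∖{b_m}, A∖{a_m}, A∖{c_m}, respectively, is a maximal independent set of G_{m−1}; and in case (3), A is a maximal independent set of G_m whenever A∖{a_m,c_m} is a maximal independent set of G_{m−2}. -/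

import Mathlib

/-- The vertex set of the graph `Gₘ`: `Sum.inl i` is the vertex `a_{i+1}` (for `0 ≤ i < m`),
`Sum.inr (Sum.inl i)` is `b_{i+1}`, and `Sum.inr (Sum.inr j)` is `c_{j+2}`. -/
abbrev GV (m : ℕ) := Fin m ⊕ Fin m ⊕ Fin (m - 1)

/-- The vertex `a_{i+1}` of `Gₘ`. -/
def aV {m : ℕ} (i : Fin m) : GV m := Sum.inl i
/-- The vertex `b_{i+1}` of `Gₘ`. -/
def bV {m : ℕ} (i : Fin m) : GV m := Sum.inr (Sum.inl i)
/-- The vertex `c_{j+2}` of `Gₘ`. -/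
def cV {m : ℕ} (j : Fin (m - 1)) : GV m := Sum.inr (Sum.inr j)

/-- Half of the adjacency relation of `Gₘ` (the full relation is its symmetrization):
the edges `a_i a_{i+1}`, `a_i b_i`, `b_i c_{i+1}`, `b_i c_i`, `c_i a_{i+1}` (1-based indices). -/
def adjHalf (m : ℕ) : GV m → GV m → Bool
  | Sum.inl i, Sum.inl j => decide (i.val + 1 = j.val)
  | Sum.inl i, Sum.inr (Sum.inl j) => decide (i = j)
  | Sum.inl _, Sum.inr (Sum.inr _) => false
  | Sum.inr (Sum.inl _), Sum.inl _ => false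
  | Sum.inr (Sum.inl _), Sum.inr (Sum.inl _) => false
  | Sum.inr (Sum.inl i), Sum.inr (Sum.inr j) => decide (i.val = j.val ∨ i.val = j.val + 1)
  | Sum.inr (Sum.inr j), Sum.inl i => decide (i.val = j.val + 2)
  | Sum.inr (Sum.inr _), Sum.inr (Sum.inl _) => false
  | Sum.inr (Sum.inr _), Sum.inr (Sum.inr _) => false

/-- The graph `Gₘ` from the paper (with `3m - 1` vertices). -/
def Gm (m : ℕ) : SimpleGraph (GV m) where
  Adj u v := adjHalf m u v = true ∨ adjHalf m v u = true
  symm := ⟨fun _ _ h => h.symm⟩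
  loopless := ⟨by
    rintro (i | i | j) h <;> simp [adjHalf] at h⟩

instance (m : ℕ) : DecidableRel (Gm m).Adj := fun u v =>
  inferInstanceAs (Decidable (adjHalf m u v = true ∨ adjHalf m v u = true))

/-- `A` is an independent set of `Gₘ`. -/
def IndepIn (m : ℕ) (A : Set (GV m)) : Prop :=
  ∀ u ∈ A, ∀ v ∈ A, ¬ (Gm m).Adj u v

/-- The vertex `v` of `Gₘ` belongs to the vertex set of the induced subgraph `G_k`
(the vertices `a_1, …, a_k, b_1, …, b_k, c_2, …, c_k`). -/
def InRange (m k : ℕ) : GV m → Prop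
  | Sum.inl i => i.val < k
  | Sum.inr (Sum.inl i) => i.val < k
  | Sum.inr (Sum.inr j) => j.val + 1 < k

/-- `A` is an independent set of the induced subgraph `G_k` of `Gₘ`. -/
def IndepInSub (m k : ℕ) (A : Set (GV m)) : Prop :=
  IndepIn m A ∧ ∀ v ∈ A, InRange m k v

/-- `A` is a maximal independent set of `Gₘ`. -/
def MaxIndepIn (m : ℕ) (A : Set (GV m)) : Prop :=
  IndepIn m A ∧ ∀ B : Set (GV m), IndepIn m B → A ⊆ B → A = B

/-- `A` is a maximal independent set of the induced subgraph `G_k` of `Gₘ`. -/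
def MaxIndepInSub (m k : ℕ) (A : Set (GV m)) : Prop :=
  IndepInSub m k A ∧ ∀ B : Set (GV m), IndepInSub m k B → A ⊆ B → A = B
section Aux
variable {m : ℕ}

lemma adj_av_bv (i j : Fin m) : (Gm m).Adj (aV i) (bV j) ↔ i = j := by
  simp [Gm, aV, bV, adjHalf]

lemma adj_av_av (i j : Fin m) : (Gm m).Adj (aV i) (aV j) ↔ i.val + 1 = j.val ∨ j.val + 1 = i.val := by
  simp [Gm, aV, adjHalf]

lemma adj_bv_cv (i : Fin m) (j : Fin (m-1)) :
    (Gm m).Adj (bV i) (cV j) ↔ i.val = j.val ∨ i.val = j.val + 1 := by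
  simp [Gm, bV, cV, adjHalf]

lemma adj_av_cv (i : Fin m) (j : Fin (m-1)) :
    (Gm m).Adj (aV i) (cV j) ↔ i.val = j.val + 2 := by
  simp [Gm, aV, cV, adjHalf]

lemma not_adj_bv_bv (i j : Fin m) : ¬ (Gm m).Adj (bV i) (bV j) := by
  simp [Gm, bV, adjHalf]

lemma not_adj_cv_cv (i j : Fin (m-1)) : ¬ (Gm m).Adj (cV i) (cV j) := by
  simp [Gm, cV, adjHalf]

lemma mem_range_m1 (hm : 3 ≤ m) {ia ib : Fin m} {ic : Fin (m-1)}
    (hia : ia.val = m-1) (hib : ib.val = m-1) (hic : ic.val = m-2) (v : GV m)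
    (h1 : v ≠ aV ia) (h2 : v ≠ bV ib) (h3 : v ≠ cV ic) : InRange m (m-1) v := by
  rcases v with i | i | j
  · have hne : i.val ≠ m - 1 := fun hh => h1 (congrArg Sum.inl (Fin.ext (by omega)))
    have := i.isLt
    show i.val < m - 1
    omega
  · have hne : i.val ≠ m - 1 := fun hh => h2 (congrArg (Sum.inr ∘ Sum.inl) (Fin.ext (by omega)))
    have := i.isLt
    show i.val < m - 1
    omega
  · have hne : j.val ≠ m - 2 := fun hh => h3 (congrArg (Sum.inr ∘ Sum.inr) (Fin.ext (by omega)))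
    have := j.isLt
    show j.val + 1 < m - 1
    omega

lemma mem_range_m2 (hm : 3 ≤ m) {ia ib ia' ib' : Fin m} {ic ic' : Fin (m-1)}
    (hia : ia.val = m-1) (hib : ib.val = m-1) (hic : ic.val = m-2)
    (hia' : ia'.val = m-2) (hib' : ib'.val = m-2) (hic' : ic'.val = m-3) (v : GV m)
    (h1 : v ≠ aV ia) (h2 : v ≠ bV ib) (h3 : v ≠ cV ic)
    (h4 : v ≠ aV ia') (h5 : v ≠ bV ib') (h6 : v ≠ cV ic') : InRange m (m-2) v := by
  rcases v with i | i | j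
  · have hn1 : i.val ≠ m - 1 := fun hh => h1 (congrArg Sum.inl (Fin.ext (by omega)))
    have hn2 : i.val ≠ m - 2 := fun hh => h4 (congrArg Sum.inl (Fin.ext (by omega)))
    have := i.isLt
    show i.val < m - 2
    omega
  · have hn1 : i.val ≠ m - 1 := fun hh => h2 (congrArg (Sum.inr ∘ Sum.inl) (Fin.ext (by omega)))
    have hn2 : i.val ≠ m - 2 := fun hh => h5 (congrArg (Sum.inr ∘ Sum.inl) (Fin.ext (by omega)))
    have := i.isLt
    show i.val < m - 2
    omega
  · have hn1 : j.val ≠ m - 2 := fun hh => h3 (congrArg (Sum.inr ∘ Sum.inr) (Fin.ext (by omega)))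
    have hn2 : j.val ≠ m - 3 := fun hh => h6 (congrArg (Sum.inr ∘ Sum.inr) (Fin.ext (by omega)))
    have := j.isLt
    show j.val + 1 < m - 2
    omega

end Aux
theorem gm_aux (m : ℕ) (hm : 3 ≤ m) (A : Set (GV m)) (hA : IndepIn m A)
    (ia ib ia' ib' : Fin m) (ic ic' : Fin (m-1))
    (hia : ia.val = m-1) (hib : ib.val = m-1) (hic : ic.val = m-2)
    (hia' : ia'.val = m-2) (hib' : ib'.val = m-2) (hic' : ic'.val = m-3) :
    (∃! i : Fin 5, ![
      A ∩ {aV ia, bV ib, cV ic} = ∅ ∧ IndepInSub m (m-1) A,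
      A ∩ {aV ia, bV ib, cV ic} = {bV ib} ∧ IndepInSub m (m-1) (A \ {bV ib}),
      A ∩ {aV ia, bV ib, cV ic} = {aV ia, cV ic} ∧ IndepInSub m (m-2) (A \ {aV ia, cV ic}) ∧
        A ∩ {aV ia', bV ib', cV ic'} = ∅,
      A ∩ {aV ia, bV ib, cV ic} = {aV ia} ∧ IndepInSub m (m-1) (A \ {aV ia}) ∧
        (A \ {aV ia}) ∩ {aV ia', cV ic'} = ∅,
      A ∩ {aV ia, bV ib, cV ic} = {cV ic} ∧ IndepInSub m (m-1) (A \ {cV ic}) ∧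
        (A \ {cV ic}) ∩ {bV ib'} = ∅ ] i) ∧
    ((A ∩ {aV ia, bV ib, cV ic} = {bV ib} ∧ IndepInSub m (m-1) (A \ {bV ib})) →
      MaxIndepInSub m (m-1) (A \ {bV ib}) → MaxIndepIn m A) ∧
    ((A ∩ {aV ia, bV ib, cV ic} = {aV ia} ∧ IndepInSub m (m-1) (A \ {aV ia}) ∧
        (A \ {aV ia}) ∩ {aV ia', cV ic'} = ∅) →
      MaxIndepInSub m (m-1) (A \ {aV ia}) → MaxIndepIn m A) ∧
    ((A ∩ {aV ia, bV ib, cV ic} = {cV ic} ∧ IndepInSub m (m-1) (A \ {cV ic}) ∧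
        (A \ {cV ic}) ∩ {bV ib'} = ∅) →
      MaxIndepInSub m (m-1) (A \ {cV ic}) → MaxIndepIn m A) ∧
    ((A ∩ {aV ia, bV ib, cV ic} = {aV ia, cV ic} ∧ IndepInSub m (m-2) (A \ {aV ia, cV ic}) ∧
        A ∩ {aV ia', bV ib', cV ic'} = ∅) →
      MaxIndepInSub m (m-2) (A \ {aV ia, cV ic}) → MaxIndepIn m A) := by
  -- basic adjacency facts
  have adjAB : (Gm m).Adj (aV ia) (bV ib) := (adj_av_bv _ _).2 (Fin.ext (by omega))
  have adjBC : (Gm m).Adj (bV ib) (cV ic) := (adj_bv_cv _ _).2 (Or.inr (by omega))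
  have adjAA' : (Gm m).Adj (aV ia) (aV ia') := (adj_av_av _ _).2 (Or.inr (by omega))
  have adjAC' : (Gm m).Adj (aV ia) (cV ic') := (adj_av_cv _ _).2 (by omega)
  have adjB'C : (Gm m).Adj (bV ib') (cV ic) := (adj_bv_cv _ _).2 (Or.inl (by omega))
  -- distinctness
  have neAB : aV ia ≠ bV ib := by simp [aV, bV]
  have neAC : aV ia ≠ cV ic := by simp [aV, cV]
  have neBC : bV ib ≠ cV ic := by simp [bV, cV]
  have neCA : cV ic ≠ aV ia := neAC.symm
  -- helpers for intersection equalities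
  have memInt : ∀ {x : GV m} {T : Set (GV m)}, A ∩ {aV ia, bV ib, cV ic} = T → x ∈ A →
      x ∈ ({aV ia, bV ib, cV ic} : Set (GV m)) → x ∈ T := fun h hx hx2 => h ▸ ⟨hx, hx2⟩
  have intMem : ∀ {x : GV m} {T : Set (GV m)}, A ∩ {aV ia, bV ib, cV ic} = T → x ∈ T →
      x ∈ A := fun h hx => (h.symm ▸ hx : _ ∈ A ∩ _).1
  -- characterization of the neighbors of b_{m-1}'
  have nbrB' : ∀ v : GV m, (Gm m).Adj (bV ib') v → v = aV ia' ∨ v = cV ic' ∨ v = cV ic := by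
    rintro (k | k | k) h
    · have h2 : k = ib' := (adj_av_bv k ib').1 h.symm
      have h3 : k.val = m - 2 := by rw [h2]; exact hib'
      exact Or.inl (congrArg Sum.inl (Fin.ext (by omega)))
    · exact absurd h (not_adj_bv_bv _ _)
    · rcases (adj_bv_cv ib' k).1 h with h2 | h2
      · exact Or.inr (Or.inr (congrArg (Sum.inr ∘ Sum.inr) (Fin.ext (by omega))))
      · exact Or.inr (Or.inl (congrArg (Sum.inr ∘ Sum.inr) (Fin.ext (by omega))))
  by_cases hb : bV ib ∈ A
  · -- Case P2 : only b_m
    have ha : aV ia ∉ A := fun h => hA _ h _ hb adjAB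
    have hc : cV ic ∉ A := fun h => hA _ hb _ h adjBC
    have interEq : A ∩ {aV ia, bV ib, cV ic} = {bV ib} := by
      ext v
      simp only [Set.mem_inter_iff, Set.mem_insert_iff, Set.mem_singleton_iff]
      constructor
      · rintro ⟨hv, rfl | rfl | rfl⟩
        exacts [absurd hv ha, rfl, absurd hv hc]
      · rintro rfl
        exact ⟨hb, Or.inr (Or.inl rfl)⟩
    have hP2 : A ∩ {aV ia, bV ib, cV ic} = {bV ib} ∧ IndepInSub m (m-1) (A \ {bV ib}) := by
      refine ⟨interEq, fun u hu v hv => hA u hu.1 v hv.1, fun v hv =>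
        mem_range_m1 hm hia hib hic v ?_ (fun h => hv.2 h) ?_⟩
      · rintro rfl; exact ha hv.1
      · rintro rfl; exact hc hv.1
    refine ⟨⟨1, hP2, ?_⟩, fun _ hmax => ?_, fun h4 _ => ?_, fun h5 _ => ?_, fun h3 _ => ?_⟩
    · intro j hj
      fin_cases j
      · exact absurd (memInt hj.1 hb (Or.inr (Or.inl rfl))) (by simp)
      · rfl
      · exact absurd (intMem hj.1 (Or.inl rfl)) ha
      · exact absurd (intMem hj.1 rfl) ha
      · exact absurd (intMem hj.1 rfl) hc
    · -- maximality for P2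
      refine ⟨hA, fun B hB hAB => Set.Subset.antisymm hAB fun v hvB => ?_⟩
      have hbB : bV ib ∈ B := hAB hb
      have hBsub : IndepInSub m (m-1) (B \ {bV ib}) := by
        refine ⟨fun u hu w hw => hB u hu.1 w hw.1, fun u hu =>
          mem_range_m1 hm hia hib hic u ?_ (fun h => hu.2 h) ?_⟩
        · rintro rfl; exact hB _ hu.1 _ hbB adjAB
        · rintro rfl; exact hB _ hbB _ hu.1 adjBC
      have heqd := hmax.2 (B \ {bV ib}) hBsub (Set.diff_subset_diff_left hAB)
      by_cases hvb : v = bV ib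
      · exact hvb ▸ hb
      · have hv : v ∈ A \ {bV ib} := by rw [heqd]; exact ⟨hvB, hvb⟩
        exact hv.1
    · exact absurd (intMem h4.1 rfl) ha
    · exact absurd (intMem h5.1 rfl) hc
    · exact absurd (intMem h3.1 (Or.inl rfl)) ha
  · by_cases ha : aV ia ∈ A <;> by_cases hc : cV ic ∈ A
    · -- Case P3 : a_m and c_m
      have hna' : aV ia' ∉ A := fun h => hA _ ha _ h adjAA'
      have hnc' : cV ic' ∉ A := fun h => hA _ ha _ h adjAC'
      have hnb' : bV ib' ∉ A := fun h => hA _ h _ hc adjB'C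
      have interEq : A ∩ {aV ia, bV ib, cV ic} = {aV ia, cV ic} := by
        ext v
        simp only [Set.mem_inter_iff, Set.mem_insert_iff, Set.mem_singleton_iff]
        constructor
        · rintro ⟨hv, rfl | rfl | rfl⟩
          exacts [Or.inl rfl, absurd hv hb, Or.inr rfl]
        · rintro (rfl | rfl)
          exacts [⟨ha, Or.inl rfl⟩, ⟨hc, Or.inr (Or.inr rfl)⟩]
      have interEq' : A ∩ {aV ia', bV ib', cV ic'} = ∅ := by
        ext v
        simp only [Set.mem_inter_iff, Set.mem_insert_iff, Set.mem_singleton_iff,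
          Set.mem_empty_iff_false, iff_false, not_and]
        rintro hv (rfl | rfl | rfl)
        exacts [hna' hv, hnb' hv, hnc' hv]
      have hP3 : A ∩ {aV ia, bV ib, cV ic} = {aV ia, cV ic} ∧
          IndepInSub m (m-2) (A \ {aV ia, cV ic}) ∧ A ∩ {aV ia', bV ib', cV ic'} = ∅ := by
        refine ⟨interEq, ⟨fun u hu v hv => hA u hu.1 v hv.1, fun v hv =>
          mem_range_m2 hm hia hib hic hia' hib' hic' v (fun h => hv.2 (Or.inl h)) ?_
            (fun h => hv.2 (Or.inr h)) ?_ ?_ ?_⟩, interEq'⟩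
        · rintro rfl; exact hb hv.1
        · rintro rfl; exact hna' hv.1
        · rintro rfl; exact hnb' hv.1
        · rintro rfl; exact hnc' hv.1
      refine ⟨⟨2, hP3, ?_⟩, fun h2 _ => ?_, fun h4 _ => ?_, fun h5 _ => ?_, fun _ hmax => ?_⟩
      · intro j hj
        fin_cases j
        · exact absurd (memInt hj.1 ha (Or.inl rfl)) (by simp)
        · exact absurd (memInt hj.1 ha (Or.inl rfl)) neAB
        · rfl
        · exact absurd (memInt hj.1 hc (Or.inr (Or.inr rfl))) neCA
        · exact absurd (memInt hj.1 ha (Or.inl rfl)) neAC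
      · exact absurd (intMem h2.1 rfl) hb
      · exact absurd (memInt h4.1 hc (Or.inr (Or.inr rfl))) neCA
      · exact absurd (memInt h5.1 ha (Or.inl rfl)) neAC
      · -- maximality for P3
        refine ⟨hA, fun B hB hAB => Set.Subset.antisymm hAB fun v hvB => ?_⟩
        have haB : aV ia ∈ B := hAB ha
        have hcB : cV ic ∈ B := hAB hc
        have hnbB : bV ib ∉ B := fun h => hB _ haB _ h adjAB
        have hna'B : aV ia' ∉ B := fun h => hB _ haB _ h adjAA'
        have hnc'B : cV ic' ∉ B := fun h => hB _ haB _ h adjAC'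
        have hnb'B : bV ib' ∉ B := fun h => hB _ h _ hcB adjB'C
        have hBsub : IndepInSub m (m-2) (B \ {aV ia, cV ic}) := by
          refine ⟨fun u hu w hw => hB u hu.1 w hw.1, fun u hu =>
            mem_range_m2 hm hia hib hic hia' hib' hic' u (fun h => hu.2 (Or.inl h)) ?_
              (fun h => hu.2 (Or.inr h)) ?_ ?_ ?_⟩
          · rintro rfl; exact hnbB hu.1
          · rintro rfl; exact hna'B hu.1
          · rintro rfl; exact hnb'B hu.1
          · rintro rfl; exact hnc'B hu.1
        have heqd := hmax.2 (B \ {aV ia, cV ic}) hBsub (Set.diff_subset_diff_left hAB)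
        by_cases hva : v = aV ia
        · exact hva ▸ ha
        · by_cases hvc : v = cV ic
          · exact hvc ▸ hc
          · have hv : v ∈ A \ {aV ia, cV ic} := by
              rw [heqd]
              exact ⟨hvB, fun h => h.elim hva hvc⟩
            exact hv.1
    · -- Case P4 : only a_m
      have hna' : aV ia' ∉ A := fun h => hA _ ha _ h adjAA'
      have hnc' : cV ic' ∉ A := fun h => hA _ ha _ h adjAC'
      have interEq : A ∩ {aV ia, bV ib, cV ic} = {aV ia} := by
        ext v
        simp only [Set.mem_inter_iff, Set.mem_insert_iff, Set.mem_singleton_iff]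
        constructor
        · rintro ⟨hv, rfl | rfl | rfl⟩
          exacts [rfl, absurd hv hb, absurd hv hc]
        · rintro rfl
          exact ⟨ha, Or.inl rfl⟩
      have hrange4 : ∀ v ∈ A \ {aV ia}, InRange m (m-1) v := by
        intro v hv
        refine mem_range_m1 hm hia hib hic v (fun h => hv.2 h) ?_ ?_
        · rintro rfl; exact hb hv.1
        · rintro rfl; exact hc hv.1
      have hP4 : A ∩ {aV ia, bV ib, cV ic} = {aV ia} ∧ IndepInSub m (m-1) (A \ {aV ia}) ∧
          (A \ {aV ia}) ∩ {aV ia', cV ic'} = ∅ := by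
        refine ⟨interEq, ⟨fun u hu v hv => hA u hu.1 v hv.1, hrange4⟩, ?_⟩
        ext v
        simp only [Set.mem_inter_iff, Set.mem_insert_iff, Set.mem_singleton_iff,
          Set.mem_empty_iff_false, iff_false, not_and]
        rintro hv (rfl | rfl)
        exacts [hna' hv.1, hnc' hv.1]
      refine ⟨⟨3, hP4, ?_⟩, fun h2 _ => ?_, fun _ hmax => ?_, fun h5 _ => ?_, fun h3 _ => ?_⟩
      · intro j hj
        fin_cases j
        · exact absurd (memInt hj.1 ha (Or.inl rfl)) (by simp)
        · exact absurd (memInt hj.1 ha (Or.inl rfl)) neAB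
        · exact absurd (intMem hj.1 (Or.inr rfl)) hc
        · rfl
        · exact absurd (memInt hj.1 ha (Or.inl rfl)) neAC
      · exact absurd (memInt h2.1 ha (Or.inl rfl)) neAB
      · -- maximality for P4
        refine ⟨hA, fun B hB hAB => Set.Subset.antisymm hAB fun v hvB => ?_⟩
        have haB : aV ia ∈ B := hAB ha
        -- first : b_{m-1}' ∈ A
        have hb'A : bV ib' ∈ A := by
          by_contra hb'A
          have hins : IndepInSub m (m-1) (insert (bV ib') (A \ {aV ia})) := by
            constructor
            · rintro u (rfl | hu) w (rfl | hw) hadj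
              · exact (Gm m).loopless.irrefl _ hadj
              · rcases nbrB' w hadj with rfl | rfl | rfl
                exacts [hna' hw.1, hnc' hw.1, hc hw.1]
              · rcases nbrB' u hadj.symm with rfl | rfl | rfl
                exacts [hna' hu.1, hnc' hu.1, hc hu.1]
              · exact hA u hu.1 w hw.1 hadj
            · rintro u (rfl | hu)
              · show ib'.val < m - 1
                omega
              · exact hrange4 u hu
          have heq := hmax.2 _ hins (Set.subset_insert _ _)
          have : bV ib' ∈ A \ {aV ia} := by rw [heq]; exact Set.mem_insert _ _
          exact hb'A this.1
        have hncB : cV ic ∉ B := fun h => hB _ (hAB hb'A) _ h adjB'C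
        have hnbB : bV ib ∉ B := fun h => hB _ haB _ h adjAB
        have hBsub : IndepInSub m (m-1) (B \ {aV ia}) := by
          refine ⟨fun u hu w hw => hB u hu.1 w hw.1, fun u hu =>
            mem_range_m1 hm hia hib hic u (fun h => hu.2 h) ?_ ?_⟩
          · rintro rfl; exact hnbB hu.1
          · rintro rfl; exact hncB hu.1
        have heqd := hmax.2 (B \ {aV ia}) hBsub (Set.diff_subset_diff_left hAB)
        by_cases hva : v = aV ia
        · exact hva ▸ ha
        · have hv : v ∈ A \ {aV ia} := by rw [heqd]; exact ⟨hvB, hva⟩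
          exact hv.1
      · exact absurd (memInt h5.1 ha (Or.inl rfl)) neAC
      · exact absurd (intMem h3.1 (Or.inr rfl)) hc
    · -- Case P5 : only c_m
      have hnb' : bV ib' ∉ A := fun h => hA _ h _ hc adjB'C
      have interEq : A ∩ {aV ia, bV ib, cV ic} = {cV ic} := by
        ext v
        simp only [Set.mem_inter_iff, Set.mem_insert_iff, Set.mem_singleton_iff]
        constructor
        · rintro ⟨hv, rfl | rfl | rfl⟩
          exacts [absurd hv ha, absurd hv hb, rfl]
        · rintro rfl
          exact ⟨hc, Or.inr (Or.inr rfl)⟩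
      have hrange5 : ∀ v ∈ A \ {cV ic}, InRange m (m-1) v := by
        intro v hv
        refine mem_range_m1 hm hia hib hic v ?_ ?_ (fun h => hv.2 h)
        · rintro rfl; exact ha hv.1
        · rintro rfl; exact hb hv.1
      have hP5 : A ∩ {aV ia, bV ib, cV ic} = {cV ic} ∧ IndepInSub m (m-1) (A \ {cV ic}) ∧
          (A \ {cV ic}) ∩ {bV ib'} = ∅ := by
        refine ⟨interEq, ⟨fun u hu v hv => hA u hu.1 v hv.1, hrange5⟩, ?_⟩
        ext v
        simp only [Set.mem_inter_iff, Set.mem_singleton_iff,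
          Set.mem_empty_iff_false, iff_false, not_and]
        rintro hv rfl
        exact hnb' hv.1
      refine ⟨⟨4, hP5, ?_⟩, fun h2 _ => ?_, fun h4 _ => ?_, fun _ hmax => ?_, fun h3 _ => ?_⟩
      · intro j hj
        fin_cases j
        · exact absurd (memInt hj.1 hc (Or.inr (Or.inr rfl))) (by simp)
        · exact absurd (memInt hj.1 hc (Or.inr (Or.inr rfl))) (Ne.symm neBC)
        · exact absurd (intMem hj.1 (Or.inl rfl)) ha
        · exact absurd (intMem hj.1 rfl) ha
        · rfl
      · exact absurd (memInt h2.1 hc (Or.inr (Or.inr rfl))) (Ne.symm neBC)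
      · exact absurd (intMem h4.1 rfl) ha
      · -- maximality for P5
        refine ⟨hA, fun B hB hAB => Set.Subset.antisymm hAB fun v hvB => ?_⟩
        have hcB : cV ic ∈ B := hAB hc
        have hor : aV ia' ∈ A ∨ cV ic' ∈ A := by
          by_contra hno
          push_neg at hno
          have hins : IndepInSub m (m-1) (insert (bV ib') (A \ {cV ic})) := by
            constructor
            · rintro u (rfl | hu) w (rfl | hw) hadj
              · exact (Gm m).loopless.irrefl _ hadj
              · rcases nbrB' w hadj with rfl | rfl | rfl
                exacts [hno.1 hw.1, hno.2 hw.1, hw.2 rfl]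
              · rcases nbrB' u hadj.symm with rfl | rfl | rfl
                exacts [hno.1 hu.1, hno.2 hu.1, hu.2 rfl]
              · exact hA u hu.1 w hw.1 hadj
            · rintro u (rfl | hu)
              · show ib'.val < m - 1
                omega
              · exact hrange5 u hu
          have heq := hmax.2 _ hins (Set.subset_insert _ _)
          have : bV ib' ∈ A \ {cV ic} := by rw [heq]; exact Set.mem_insert _ _
          exact hnb' this.1
        have hnaB : aV ia ∉ B := by
          rcases hor with h | h
          · exact fun hh => hB _ hh _ (hAB h) adjAA'
          · exact fun hh => hB _ hh _ (hAB h) adjAC'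
        have hnbB : bV ib ∉ B := fun h => hB _ h _ hcB adjBC
        have hBsub : IndepInSub m (m-1) (B \ {cV ic}) := by
          refine ⟨fun u hu w hw => hB u hu.1 w hw.1, fun u hu =>
            mem_range_m1 hm hia hib hic u ?_ ?_ (fun h => hu.2 h)⟩
          · rintro rfl; exact hnaB hu.1
          · rintro rfl; exact hnbB hu.1
        have heqd := hmax.2 (B \ {cV ic}) hBsub (Set.diff_subset_diff_left hAB)
        by_cases hvc : v = cV ic
        · exact hvc ▸ hc
        · have hv : v ∈ A \ {cV ic} := by rw [heqd]; exact ⟨hvB, hvc⟩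
          exact hv.1
      · exact absurd (intMem h3.1 (Or.inl rfl)) ha
    · -- Case P1 : none
      have interEq : A ∩ {aV ia, bV ib, cV ic} = ∅ := by
        ext v
        simp only [Set.mem_inter_iff, Set.mem_insert_iff, Set.mem_singleton_iff,
          Set.mem_empty_iff_false, iff_false, not_and]
        rintro hv (rfl | rfl | rfl)
        exacts [ha hv, hb hv, hc hv]
      have hP1 : A ∩ {aV ia, bV ib, cV ic} = ∅ ∧ IndepInSub m (m-1) A := by
        refine ⟨interEq, hA, fun v hv => mem_range_m1 hm hia hib hic v ?_ ?_ ?_⟩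
        · rintro rfl; exact ha hv
        · rintro rfl; exact hb hv
        · rintro rfl; exact hc hv
      refine ⟨⟨0, hP1, ?_⟩, fun h2 _ => ?_, fun h4 _ => ?_, fun h5 _ => ?_, fun h3 _ => ?_⟩
      · intro j hj
        fin_cases j
        · rfl
        · exact absurd (intMem hj.1 rfl) hb
        · exact absurd (intMem hj.1 (Or.inl rfl)) ha
        · exact absurd (intMem hj.1 rfl) ha
        · exact absurd (intMem hj.1 rfl) hc
      · exact absurd (intMem h2.1 rfl) hb
      · exact absurd (intMem h4.1 rfl) ha
      · exact absurd (intMem h5.1 rfl) hc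
      · exact absurd (intMem h3.1 (Or.inl rfl)) ha

/-- Classification of independent sets of `Gₘ` (`m ≥ 3`): exactly one of the five cases
(1)–(5) of Proposition `indep_gm` holds, and the corresponding maximality criteria hold. -/
theorem Gm_indep_classification (m : ℕ) (hm : 3 ≤ m) (A : Set (GV m)) (hA : IndepIn m A) :
    let am : GV m := aV ⟨m - 1, by omega⟩
    let bm : GV m := bV ⟨m - 1, by omega⟩
    let cm : GV m := cV ⟨m - 2, by omega⟩
    let am' : GV m := aV ⟨m - 2, by omega⟩
    let bm' : GV m := bV ⟨m - 2, by omega⟩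
    let cm' : GV m := cV ⟨m - 3, by omega⟩
    let P1 : Prop := A ∩ {am, bm, cm} = ∅ ∧ IndepInSub m (m - 1) A
    let P2 : Prop := A ∩ {am, bm, cm} = {bm} ∧ IndepInSub m (m - 1) (A \ {bm})
    let P3 : Prop := A ∩ {am, bm, cm} = {am, cm} ∧ IndepInSub m (m - 2) (A \ {am, cm}) ∧
      A ∩ {am', bm', cm'} = ∅
    let P4 : Prop := A ∩ {am, bm, cm} = {am} ∧ IndepInSub m (m - 1) (A \ {am}) ∧
      (A \ {am}) ∩ {am', cm'} = ∅
    let P5 : Prop := A ∩ {am, bm, cm} = {cm} ∧ IndepInSub m (m - 1) (A \ {cm}) ∧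
      (A \ {cm}) ∩ {bm'} = ∅
    (∃! i : Fin 5, ![P1, P2, P3, P4, P5] i) ∧
    (P2 → MaxIndepInSub m (m - 1) (A \ {bm}) → MaxIndepIn m A) ∧
    (P4 → MaxIndepInSub m (m - 1) (A \ {am}) → MaxIndepIn m A) ∧
    (P5 → MaxIndepInSub m (m - 1) (A \ {cm}) → MaxIndepIn m A) ∧
    (P3 → MaxIndepInSub m (m - 2) (A \ {am, cm}) → MaxIndepIn m A) := by
  intro am bm cm am' bm' cm' P1 P2 P3 P4 P5
  exact gm_aux m hm A hA ⟨m - 1, by omega⟩ ⟨m - 1, by omega⟩ ⟨m - 2, by omega⟩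
    ⟨m - 2, by omega⟩ ⟨m - 2, by omega⟩ ⟨m - 3, by omega⟩ rfl rfl rfl rfl rfl rfl
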